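/- arXiv:2105.13629 — 3 statements merged into one kernel-verified Lean document; each statement's English description precedes it below -/
import Mathlib

section
/- Let N ≥ 1 be an integer, t > 1 real, and M, c > 0. Define φ : ℝ^N → ℝ by φ(x) = M·e^{−c‖x‖} and the vector field g(y) = ‖∇φ(y)‖^{t−2} ∇φ(y) for y ≠ 0. Then for every x ≠ 0 the field g is differentiable at x and its divergence (the trace of its Fréchet derivative) satisfies div g(x) = c^{t−1} φ(x)^{t−1} ( c(t−1) − (N−1)/‖x‖ ). Consequently, for every V₀ > 0 with c^t (t−1) < V₀/2 one has −div g(x) + (V₀/2) φ(x)^{t−1} > 0 for all x ≠ 0. -/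
open Filter MeasureTheory
open scoped Topology

/-- The barrier function `φ(x) = M e^{-c ‖x‖}`. -/
noncomputable def phiBarrier (N : ℕ) (M c : ℝ) (x : EuclideanSpace ℝ (Fin N)) : ℝ :=
  M * Real.exp (-c * ‖x‖)

/-- The vector field `g(y) = ‖∇φ(y)‖^{t-2} ∇φ(y)`. -/
noncomputable def gField (N : ℕ) (t M c : ℝ) (y : EuclideanSpace ℝ (Fin N)) :
    EuclideanSpace ℝ (Fin N) :=
  (‖gradient (phiBarrier N M c) y‖ ^ (t - 2)) • gradient (phiBarrier N M c) y

/-- The divergence of `g`, i.e. the trace of its Fréchet derivative. -/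
noncomputable def divG (N : ℕ) (t M c : ℝ) (x : EuclideanSpace ℝ (Fin N)) : ℝ :=
  LinearMap.trace ℝ (EuclideanSpace ℝ (Fin N)) (fderiv ℝ (gField N t M c) x).toLinearMap

/-!
Since `φ` is radial, `∇φ(y) = -(c φ(y) / ‖y‖) y` and `‖∇φ(y)‖ = c φ(y)`, so away from the origin
`g(y) = k(‖y‖) y` with `k(r) = -(c M)^{t-1} e^{-c(t-1) r} / r` (`gProfile`), using
`(c φ)^{t-1} = (c M)^{t-1} e^{-c(t-1)‖y‖}`. The Fréchet derivative of a radial field `k(‖y‖) y` is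
`k(r) id + k'(r) ⟨y/r, ·⟩ y`, whose trace is `N k(r) + r k'(r)`; this gives the divergence formula.
In it the term `(N - 1)/‖x‖` has the good sign, and the remaining `c^t (t-1) φ^{t-1}` is dominated
by `(V₀/2) φ^{t-1}`.
-/

open scoped RealInnerProductSpace

section Radial

variable {E : Type*} [NormedAddCommGroup E] [InnerProductSpace ℝ E] {x : E}

theorem hasFDerivAt_norm_of_ne_zero (hx : x ≠ 0) :
    HasFDerivAt (fun y : E => ‖y‖) (innerSL ℝ (‖x‖⁻¹ • x)) x := by
  have h := (hasStrictFDerivAt_norm_sq x).hasFDerivAt.sqrt (by simpa using hx)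
  simp only [Real.sqrt_sq (norm_nonneg _)] at h
  convert h using 1
  ext y
  simp
  field_simp

theorem HasDerivAt.hasGradientAt_comp_norm [CompleteSpace E] {f : ℝ → ℝ} {f' : ℝ}
    (hf : HasDerivAt f f' ‖x‖) (hx : x ≠ 0) :
    HasGradientAt (fun y => f ‖y‖) ((f' / ‖x‖) • x) x := by
  rw [hasGradientAt_iff_hasFDerivAt]
  refine (hf.comp_hasFDerivAt x (hasFDerivAt_norm_of_ne_zero hx)).congr_fderiv ?_
  ext y
  simp [div_eq_mul_inv, mul_assoc]

theorem HasDerivAt.hasFDerivAt_smul_comp_norm {k : ℝ → ℝ} {k' : ℝ}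
    (hk : HasDerivAt k k' ‖x‖) (hx : x ≠ 0) :
    HasFDerivAt (fun y => k ‖y‖ • y)
      (k ‖x‖ • ContinuousLinearMap.id ℝ E + (innerSL ℝ ((k' / ‖x‖) • x)).smulRight x) x := by
  refine ((hk.comp_hasFDerivAt x (hasFDerivAt_norm_of_ne_zero hx)).smul
    (hasFDerivAt_id x)).congr_fderiv ?_
  simp only [div_eq_mul_inv, ← smul_smul, map_smul]
  rfl

theorem trace_smul_id_add_smulRight_innerSL [FiniteDimensional ℝ E] (a : ℝ) (v w : E) :
    LinearMap.trace ℝ E (a • ContinuousLinearMap.id ℝ E + (innerSL ℝ v).smulRight w).toLinearMap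
      = a * Module.finrank ℝ E + ⟪v, w⟫ := by
  simp

theorem HasDerivAt.trace_fderiv_smul_comp_norm [FiniteDimensional ℝ E] {k : ℝ → ℝ} {k' : ℝ}
    (hk : HasDerivAt k k' ‖x‖) (hx : x ≠ 0) :
    LinearMap.trace ℝ E (fderiv ℝ (fun y => k ‖y‖ • y) x).toLinearMap
      = k ‖x‖ * Module.finrank ℝ E + k' * ‖x‖ := by
  rw [(hk.hasFDerivAt_smul_comp_norm hx).fderiv, trace_smul_id_add_smulRight_innerSL,
    real_inner_smul_left, real_inner_self_eq_norm_sq]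
  field_simp

end Radial

section Barrier

variable {N : ℕ} {t M c : ℝ} {x : EuclideanSpace ℝ (Fin N)}

theorem phiBarrier_hasGradientAt (hx : x ≠ 0) :
    HasGradientAt (phiBarrier N M c) ((-(c * phiBarrier N M c x) / ‖x‖) • x) x := by
  have hp : HasDerivAt (fun r => M * Real.exp (-c * r)) (-(c * phiBarrier N M c x)) ‖x‖ :=
    (((hasDerivAt_id _).const_mul (-c)).exp.const_mul M).congr_deriv
      (by simp only [phiBarrier, id]; ring)
  exact hp.hasGradientAt_comp_norm hx

theorem rpow_mul_phiBarrier (hcM : 0 ≤ c * M) (s : ℝ) :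
    (c * phiBarrier N M c x) ^ s = (c * M) ^ s * Real.exp (-(c * s) * ‖x‖) := by
  rw [phiBarrier, ← mul_assoc, Real.mul_rpow hcM (Real.exp_pos _).le, ← Real.exp_mul]
  ring_nf

noncomputable def gProfile (t M c r : ℝ) : ℝ :=
  -((c * M) ^ (t - 1) * Real.exp (-(c * (t - 1)) * r)) / r

theorem gProfile_hasDerivAt {r : ℝ} (hr : r ≠ 0) :
    HasDerivAt (gProfile t M c)
      ((c * M) ^ (t - 1) * Real.exp (-(c * (t - 1)) * r) * (c * (t - 1) * r + 1) / r ^ 2) r := by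
  have he :=
    (((hasDerivAt_id r).const_mul (-(c * (t - 1)))).exp.const_mul ((c * M) ^ (t - 1))).neg
  refine (he.div (hasDerivAt_id r) hr).congr_deriv ?_
  simp only [id, Pi.neg_apply]
  field_simp
  ring

theorem gField_eq_gProfile_smul (hcM : 0 < c * M) {y : EuclideanSpace ℝ (Fin N)} (hy : y ≠ 0) :
    gField N t M c y = gProfile t M c ‖y‖ • y := by
  have hr : 0 < ‖y‖ := norm_pos_iff.2 hy
  have hcφ : 0 < c * phiBarrier N M c y := by
    rw [phiBarrier, ← mul_assoc]; positivity
  have hnorm : ‖gradient (phiBarrier N M c) y‖ = c * phiBarrier N M c y := by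
    rw [(phiBarrier_hasGradientAt hy).gradient, norm_smul, norm_div, norm_neg, norm_norm,
      Real.norm_of_nonneg hcφ.le]
    field_simp
  rw [gField, hnorm, (phiBarrier_hasGradientAt hy).gradient, smul_smul, gProfile,
    ← rpow_mul_phiBarrier hcM.le]
  congr 1
  rw [show t - 1 = (t - 2) + 1 by ring, Real.rpow_add_one hcφ.ne']
  ring

theorem gField_eventuallyEq (hcM : 0 < c * M) (hx : x ≠ 0) :
    gField N t M c =ᶠ[𝓝 x] fun y => gProfile t M c ‖y‖ • y := by
  filter_upwards [isOpen_compl_singleton.mem_nhds hx] with y hy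
  exact gField_eq_gProfile_smul hcM hy

theorem gField_differentiableAt (hcM : 0 < c * M) (hx : x ≠ 0) :
    DifferentiableAt ℝ (gField N t M c) x :=
  ((gProfile_hasDerivAt (norm_ne_zero_iff.2 hx)).hasFDerivAt_smul_comp_norm hx
    |>.congr_of_eventuallyEq (gField_eventuallyEq hcM hx)).differentiableAt

theorem divG_eq (hM : 0 < M) (hc : 0 < c) (hx : x ≠ 0) :
    divG N t M c x = c ^ (t - 1) * (phiBarrier N M c x) ^ (t - 1)
      * (c * (t - 1) - ((N : ℝ) - 1) / ‖x‖) := by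
  have hr : ‖x‖ ≠ 0 := norm_ne_zero_iff.2 hx
  rw [divG, (gField_eventuallyEq (mul_pos hc hM) hx).fderiv_eq,
    (gProfile_hasDerivAt hr).trace_fderiv_smul_comp_norm hx, finrank_euclideanSpace_fin,
    ← Real.mul_rpow hc.le (by rw [phiBarrier]; positivity), rpow_mul_phiBarrier (mul_pos hc hM).le,
    gProfile]
  field_simp
  ring

end Barrier

theorem stmt14_general (N : ℕ) (hN : 1 ≤ N) (t M c : ℝ) (hM : 0 < M) (hc : 0 < c) :
    ∀ x : EuclideanSpace ℝ (Fin N), x ≠ 0 →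
      (DifferentiableAt ℝ (gField N t M c) x ∧
        divG N t M c x
          = c ^ (t - 1) * (phiBarrier N M c x) ^ (t - 1)
              * (c * (t - 1) - ((N : ℝ) - 1) / ‖x‖)) ∧
      ∀ V₀ : ℝ, 0 < V₀ → c ^ t * (t - 1) < V₀ / 2 →
        0 < -(divG N t M c x) + (V₀ / 2) * (phiBarrier N M c x) ^ (t - 1) := by
  intro x hx
  have hdiv := divG_eq (t := t) hM hc hx
  refine ⟨⟨gField_differentiableAt (mul_pos hc hM) hx, hdiv⟩, fun V₀ _ hV => ?_⟩
  have hφ : 0 < phiBarrier N M c x ^ (t - 1) := by rw [phiBarrier]; positivity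
  have hct : c ^ t = c ^ (t - 1) * c := by rw [← Real.rpow_add_one hc.ne']; ring_nf
  have hN' : 0 ≤ ((N : ℝ) - 1) / ‖x‖ :=
    div_nonneg (sub_nonneg.2 (by exact_mod_cast hN)) (norm_nonneg x)
  calc 0 < phiBarrier N M c x ^ (t - 1)
        * (c ^ (t - 1) * (((N : ℝ) - 1) / ‖x‖) + (V₀ / 2 - c ^ t * (t - 1))) :=
        mul_pos hφ (add_pos_of_nonneg_of_pos (mul_nonneg (by positivity) hN') (sub_pos.2 hV))
    _ = _ := by rw [hdiv, hct]; ring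

theorem stmt14 (N : ℕ) (hN : 1 ≤ N) (t M c : ℝ) (ht : 1 < t) (hM : 0 < M) (hc : 0 < c) :
    ∀ x : EuclideanSpace ℝ (Fin N), x ≠ 0 →
      (DifferentiableAt ℝ (gField N t M c) x ∧
        divG N t M c x
          = c ^ (t - 1) * (phiBarrier N M c x) ^ (t - 1)
              * (c * (t - 1) - ((N : ℝ) - 1) / ‖x‖)) ∧
      ∀ V₀ : ℝ, 0 < V₀ → c ^ t * (t - 1) < V₀ / 2 →
        0 < -(divG N t M c x) + (V₀ / 2) * (phiBarrier N M c x) ^ (t - 1) :=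
  stmt14_general N hN t M c hM hc
end

section
/- Let N ≥ 1, q ∈ [1, ∞), V∞ ∈ ℝ, and let V : ℝ^N → ℝ be continuous with V ≥ 0 and liminf_{‖x‖ → ∞} V(x) ≥ V∞. Let v_n : ℝ^N → ℝ be measurable functions such that sup_n ∫_{ℝ^N} |v_n|^q dx < ∞, the function x ↦ V(x)|v_n(x)|^q is integrable for every n, and ∫_{B_R(0)} |v_n|^q dx → 0 as n → ∞ for every R > 0. Then limsup_{n → ∞} ∫_{ℝ^N} (V∞ − V(x)) |v_n(x)|^q dx ≤ 0. -/
open Filter MeasureTheory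
open scoped Topology ENNReal

theorem stmt15 (N : ℕ) (hN : 1 ≤ N) (q Vinf : ℝ) (hq : 1 ≤ q)
    (V : EuclideanSpace ℝ (Fin N) → ℝ) (hVc : Continuous V) (hV0 : ∀ x, 0 ≤ V x)
    (hliminf : Vinf ≤ Filter.liminf V (Filter.cocompact (EuclideanSpace ℝ (Fin N))))
    (v : ℕ → EuclideanSpace ℝ (Fin N) → ℝ) (hv : ∀ n, Measurable (v n))
    (hbdd : (⨆ n, ∫⁻ x : EuclideanSpace ℝ (Fin N), ENNReal.ofReal (|v n x| ^ q)) < ⊤)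
    (hVint : ∀ n, Integrable (fun x : EuclideanSpace ℝ (Fin N) => V x * |v n x| ^ q))
    (hloc : ∀ R > (0:ℝ), Tendsto (fun n =>
        ∫⁻ x in Metric.ball (0 : EuclideanSpace ℝ (Fin N)) R,
          ENNReal.ofReal (|v n x| ^ q)) atTop (𝓝 0)) :
    Filter.limsup (fun n => ∫ x : EuclideanSpace ℝ (Fin N), (Vinf - V x) * |v n x| ^ q)
      Filter.atTop ≤ 0 := by
  classical
  set g : ℕ → EuclideanSpace ℝ (Fin N) → ℝ := fun n x => |v n x| ^ q with hg
  have hgm : ∀ n, Measurable (g n) := fun n =>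
    (continuous_abs.rpow_const (fun x => Or.inr (by linarith))).measurable.comp (hv n)
  have hgnn : ∀ n x, 0 ≤ g n x := fun n x => Real.rpow_nonneg (abs_nonneg _) q
  set M : ℝ≥0∞ := ⨆ n, ∫⁻ x, ENNReal.ofReal (g n x) with hM
  have hMne : M ≠ ⊤ := hbdd.ne
  have hIle : ∀ n, (∫⁻ x, ENNReal.ofReal (g n x)) ≤ M := fun n =>
    le_iSup (fun n => ∫⁻ x, ENNReal.ofReal (g n x)) n
  have hgint : ∀ n, Integrable (g n) := by
    intro n
    refine ⟨(hgm n).aestronglyMeasurable, ?_⟩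
    rw [hasFiniteIntegral_iff_ofReal (ae_of_all _ (hgnn n))]
    exact lt_of_le_of_lt (hIle n) hbdd
  have hfint : ∀ n, Integrable (fun x => (Vinf - V x) * g n x) := by
    intro n
    have : (fun x => (Vinf - V x) * g n x) = fun x => Vinf * g n x - V x * g n x := by
      funext x; ring
    rw [this]
    exact ((hgint n).const_mul Vinf).sub (hVint n)
  set a : ℕ → ℝ := fun n => ∫ x, (Vinf - V x) * g n x with ha
  have key : ∀ ε > (0:ℝ), ∀ᶠ n in atTop, a n ≤ ε := by
    intro ε hε
    set M' : ℝ := M.toReal with hM'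
    have hM'0 : 0 ≤ M' := ENNReal.toReal_nonneg
    set δ : ℝ := ε / (2 * (M' + 1)) with hδ
    have hδ0 : 0 < δ := by positivity
    have hlt : Vinf - δ < Filter.liminf V (Filter.cocompact (EuclideanSpace ℝ (Fin N))) :=
      lt_of_lt_of_le (by linarith) hliminf
    have hbdV : (Filter.cocompact (EuclideanSpace ℝ (Fin N))).IsBoundedUnder (· ≥ ·) V :=
      ⟨0, Filter.eventually_map.mpr (Filter.Eventually.of_forall fun x => hV0 x)⟩
    have hev := Filter.eventually_lt_of_lt_liminf hlt hbdV
    obtain ⟨K, hK, hKs⟩ := Filter.mem_cocompact.1 hev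
    obtain ⟨r, hr⟩ := hK.isBounded.subset_closedBall 0
    set R : ℝ := max r 0 + 1 with hR
    have hR0 : 0 < R := by positivity
    set B := Metric.ball (0 : EuclideanSpace ℝ (Fin N)) R with hB
    have hKB : K ⊆ B := by
      intro x hx
      have := hr hx
      simp only [Metric.mem_closedBall] at this
      simp only [hB, Metric.mem_ball]
      have : dist x 0 ≤ max r 0 := le_trans this (le_max_left _ _)
      linarith
    have hBm : MeasurableSet B := measurableSet_ball
    have houts : ∀ x ∉ B, Vinf - V x ≤ δ := by
      intro x hx
      have hxK : x ∉ K := fun h => hx (hKB h)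
      have : Vinf - δ < V x := hKs hxK
      linarith
    set ε2 : ℝ := ε / (2 * (|Vinf| + 1)) with hε2
    have hε20 : 0 < ε2 := by positivity
    have hsm : ∀ᶠ n in atTop,
        (∫⁻ x in B, ENNReal.ofReal (g n x)) < ENNReal.ofReal ε2 :=
      (hloc R hR0).eventually_lt_const (ENNReal.ofReal_pos.mpr hε20)
    filter_upwards [hsm] with n hn
    have hsplit : a n = (∫ x in B, (Vinf - V x) * g n x)
        + ∫ x in Bᶜ, (Vinf - V x) * g n x :=
      (integral_add_compl hBm (hfint n)).symm
    have hintB : ∫ x in B, g n x ≤ ε2 := by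
      have heq : ∫ x in B, g n x = (∫⁻ x in B, ENNReal.ofReal (g n x)).toReal :=
        integral_eq_lintegral_of_nonneg_ae (ae_of_all _ (hgnn n))
          (hgm n).aestronglyMeasurable
      rw [heq]
      exact ENNReal.toReal_le_of_le_ofReal hε20.le hn.le
    have hintBnn : 0 ≤ ∫ x in B, g n x :=
      setIntegral_nonneg hBm fun x _ => hgnn n x
    have hintBc : ∫ x in Bᶜ, g n x ≤ M' := by
      have h1 : ∫ x in Bᶜ, g n x ≤ ∫ x, g n x :=
        setIntegral_le_integral (hgint n) (ae_of_all _ (hgnn n))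
      have h2 : ∫ x, g n x = (∫⁻ x, ENNReal.ofReal (g n x)).toReal :=
        integral_eq_lintegral_of_nonneg_ae (ae_of_all _ (hgnn n))
          (hgm n).aestronglyMeasurable
      have h3 : (∫⁻ x, ENNReal.ofReal (g n x)).toReal ≤ M' :=
        ENNReal.toReal_mono hMne (hIle n)
      linarith
    have hintBcnn : 0 ≤ ∫ x in Bᶜ, g n x :=
      setIntegral_nonneg hBm.compl fun x _ => hgnn n x
    have hb1 : ∫ x in B, (Vinf - V x) * g n x ≤ |Vinf| * ∫ x in B, g n x := by
      rw [← integral_const_mul]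
      refine setIntegral_mono_on ((hfint n).integrableOn)
        (((hgint n).const_mul |Vinf|).integrableOn) hBm fun x _ => ?_
      have h1 : Vinf - V x ≤ |Vinf| := by
        have := hV0 x; have := le_abs_self Vinf; linarith
      exact mul_le_mul_of_nonneg_right h1 (hgnn n x)
    have hb2 : ∫ x in Bᶜ, (Vinf - V x) * g n x ≤ δ * ∫ x in Bᶜ, g n x := by
      rw [← integral_const_mul]
      refine setIntegral_mono_on ((hfint n).integrableOn)
        (((hgint n).const_mul δ).integrableOn) hBm.compl fun x hx => ?_
      exact mul_le_mul_of_nonneg_right (houts x hx) (hgnn n x)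
    have h1 : |Vinf| * ∫ x in B, g n x ≤ |Vinf| * ε2 :=
      mul_le_mul_of_nonneg_left hintB (abs_nonneg _)
    have h2 : δ * ∫ x in Bᶜ, g n x ≤ δ * M' :=
      mul_le_mul_of_nonneg_left hintBc hδ0.le
    have h3 : |Vinf| * ε2 ≤ ε / 2 := by
      rw [hε2, mul_div_assoc', div_le_div_iff₀ (by positivity) (by norm_num)]
      nlinarith [abs_nonneg Vinf]
    have h4 : δ * M' ≤ ε / 2 := by
      rw [hδ, div_mul_eq_mul_div, div_le_div_iff₀ (by positivity) (by norm_num)]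
      nlinarith
    linarith
  rw [Filter.limsup_eq]
  by_cases hbb : BddBelow {c : ℝ | ∀ᶠ n in atTop, a n ≤ c}
  · refine le_of_forall_pos_le_add fun ε hε => ?_
    have := csInf_le hbb (key ε hε)
    simpa using this
  · rw [Real.sInf_of_not_bddBelow hbb]
end

section
/- Let 1 < p < q < N with q* = Nq/(N−q), let r ∈ (q, q*), let V₀ > 0 and let V : ℝ^N → ℝ be continuous with V(x) ≥ V₀ for all x. Let f : ℝ → ℝ be continuous with lim_{t → 0} f(t)/|t|^{p-1} = 0 and lim_{|t| → ∞} f(t)/|t|^{r-1} = 0. For a continuously differentiable compactly supported u : ℝ^N → ℝ and t ∈ {p, q} set ‖u‖_{V,t}^t = ∫_{ℝ^N} ‖∇u(x)‖^t dx + ∫_{ℝ^N} V(x)|u(x)|^t dx. Then there exists κ > 0 such that every continuously differentiable compactly supported u : ℝ^N → ℝ that is not identically zero and satisfies the Nehari identity ‖u‖_{V,p}^p + ‖u‖_{V,q}^q = ∫_{ℝ^N} f(u(x)) u(x) dx must satisfy ‖u‖_{V,p} + ‖u‖_{V,q} ≥ κ. -/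
/-!
Choose `C` with `f t * t ≤ V₀ |t|^p + C |t|^r` for all `t`, which the two limits and continuity
of `f` allow. On the Nehari set the term `V₀ ∫ |u|^p` is absorbed by `‖u‖_{V,p}^p`, leaving
`B := ‖u‖_{V,q}^q ≤ C ∫ |u|^r`. Interpolating `L^r` between `L^q` and `L^{q*}` and bounding the
`L^{q*}` norm by the Gagliardo–Nirenberg–Sobolev inequality gives `∫ |u|^r ≤ K' B^{r/q}`.
So `0 < B ≤ c B^{r/q}` with `r/q > 1`, which bounds `B` below by `c^{-q/(r-q)}`.
-/

open Filter MeasureTheory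
open scoped Topology

/-- `‖u‖_{V,t}^t = ∫ ‖∇u‖^t dx + ∫ V |u|^t dx`. -/
noncomputable def pNormPow (N : ℕ) (V : EuclideanSpace ℝ (Fin N) → ℝ) (t : ℝ)
    (u : EuclideanSpace ℝ (Fin N) → ℝ) : ℝ :=
  (∫ x : EuclideanSpace ℝ (Fin N), ‖fderiv ℝ u x‖ ^ t)
    + ∫ x : EuclideanSpace ℝ (Fin N), V x * |u x| ^ t

/-- `‖u‖_{V,t}`. -/
noncomputable def vNorm (N : ℕ) (V : EuclideanSpace ℝ (Fin N) → ℝ) (t : ℝ)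
    (u : EuclideanSpace ℝ (Fin N) → ℝ) : ℝ :=
  (pNormPow N V t u) ^ (1 / t)

open Set Module
open scoped ENNReal NNReal

theorem rpow_inv_sub_one_le_of_le_mul_rpow {a c x : ℝ} (ha : 1 < a) (hx : 0 < x)
    (h : x ≤ c * x ^ a) : c⁻¹ ^ (a - 1)⁻¹ ≤ x := by
  have ha1 : 0 < a - 1 := sub_pos.2 ha
  have hxa : 0 < x ^ (a - 1) := Real.rpow_pos_of_pos hx _
  rw [← div_mul_cancel₀ (x ^ a) hx.ne', ← Real.rpow_sub_one hx.ne', ← mul_assoc,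
    le_mul_iff_one_le_left hx] at h
  have hc : 0 < c := pos_of_mul_pos_left (one_pos.trans_le h) hxa.le
  calc c⁻¹ ^ (a - 1)⁻¹ ≤ (x ^ (a - 1)) ^ (a - 1)⁻¹ := by
        gcongr
        rwa [inv_le_iff_one_le_mul₀' hc]
    _ = x := Real.rpow_rpow_inv hx.le ha1.ne'

theorem exists_mem_Ioo_inv_eq_add {q r s : ℝ} (hq : 0 < q) (hqr : q < r) (hrs : r < s) :
    ∃ θ ∈ Ioo (0 : ℝ) 1, r⁻¹ = θ / q + (1 - θ) / s := by
  have hsr : s⁻¹ < r⁻¹ := inv_strictAnti₀ (hq.trans hqr) hrs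
  have hrq : r⁻¹ < q⁻¹ := inv_strictAnti₀ hq hqr
  have hqs : q⁻¹ - s⁻¹ ≠ 0 := by linarith
  refine ⟨(r⁻¹ - s⁻¹) / (q⁻¹ - s⁻¹), ⟨div_pos (by linarith) (by linarith), ?_⟩, ?_⟩
  · rw [div_lt_one (by linarith)]
    linarith
  · rw [div_eq_mul_inv _ q, div_eq_mul_inv _ s]
    linear_combination (div_mul_cancel₀ (r⁻¹ - s⁻¹) hqs).symm

theorem eventually_mul_self_le_of_tendsto_div_abs_rpow {l : Filter ℝ} {f : ℝ → ℝ} {e ε : ℝ}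
    (hε : 0 < ε) (h : Tendsto (fun t => f t / |t| ^ (e - 1)) l (𝓝 0)) :
    ∀ᶠ t in l, f t * t ≤ ε * |t| ^ e := by
  filter_upwards [(tendsto_order.1 h.abs).2 ε (by simpa using hε)] with t ht
  rcases eq_or_ne t 0 with rfl | ht0
  · simp only [mul_zero, abs_zero]
    positivity
  have htpos : 0 < |t| := abs_pos.2 ht0
  rw [abs_div, abs_of_pos (Real.rpow_pos_of_pos htpos _), div_lt_iff₀ (by positivity)] at ht
  calc f t * t ≤ |f t| * |t| := by rw [← abs_mul]; exact le_abs_self _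
    _ ≤ ε * |t| ^ (e - 1) * |t| := by gcongr
    _ = ε * |t| ^ e := by
      rw [Real.rpow_sub_one htpos.ne', mul_assoc, div_mul_cancel₀ _ htpos.ne']

theorem exists_mul_self_le_rpow_add_rpow {f : ℝ → ℝ} (hf : Continuous f) {p r ε : ℝ}
    (hε : 0 < ε) (h0 : Tendsto (fun t => f t / |t| ^ (p - 1)) (𝓝[≠] 0) (𝓝 0))
    (hinf : Tendsto (fun t => f t / |t| ^ (r - 1)) (cocompact ℝ) (𝓝 0)) :
    ∃ C ≥ 0, ∀ t, f t * t ≤ ε * |t| ^ p + C * |t| ^ r := by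
  -- Near `0` and outside a compact set `K` the limits give the bound; on the compact rest, which
  -- avoids `0`, the quotient `f t * t / |t| ^ r` is continuous, hence bounded.
  obtain ⟨U, hU, hsmall⟩ : ∃ U ∈ 𝓝 (0 : ℝ), ∀ t ∈ U, f t * t ≤ ε * |t| ^ p := by
    refine ⟨{t | f t * t ≤ ε * |t| ^ p}, ?_, fun t ht => ht⟩
    rw [← nhdsNE_sup_pure]
    refine ⟨eventually_mul_self_le_of_tendsto_div_abs_rpow hε h0, ?_⟩
    show f 0 * 0 ≤ ε * |0| ^ p
    simp only [mul_zero, abs_zero]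
    positivity
  obtain ⟨K, hK, hlarge⟩ := hasBasis_cocompact.eventually_iff.1
    (eventually_mul_self_le_of_tendsto_div_abs_rpow one_pos hinf)
  have hmid_ne : ∀ t ∈ K \ interior U, t ≠ 0 := by
    rintro _ ⟨-, ht⟩ rfl
    exact ht (mem_interior_iff_mem_nhds.2 hU)
  obtain ⟨M, hM⟩ := (hK.diff isOpen_interior).bddAbove_image
    (f := fun t => f t * t / |t| ^ r) <| ((hf.mul continuous_id).continuousOn).div
      (continuous_abs.continuousOn.rpow_const fun t ht => Or.inl (abs_ne_zero.2 (hmid_ne t ht)))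
      fun t ht => (Real.rpow_pos_of_pos (abs_pos.2 (hmid_ne t ht)) r).ne'
  refine ⟨max M 1, le_max_of_le_right zero_le_one, fun t => ?_⟩
  have hεp : 0 ≤ ε * |t| ^ p := by positivity
  have hCr : 0 ≤ max M 1 * |t| ^ r := by positivity
  by_cases htK : t ∈ K
  · by_cases htU : t ∈ interior U
    · linarith [hsmall t (interior_subset htU)]
    have hpos : 0 < |t| ^ r := Real.rpow_pos_of_pos (abs_pos.2 (hmid_ne t ⟨htK, htU⟩)) r
    have hbound := (div_le_iff₀ hpos).1 (hM ⟨t, ⟨htK, htU⟩, rfl⟩)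
    nlinarith [le_max_left M 1]
  · nlinarith [hlarge htK, le_max_right M 1, Real.rpow_nonneg (abs_nonneg t) r]

theorem HasCompactSupport.abs_rpow {X : Type*} [TopologicalSpace X] {u : X → ℝ}
    (h : HasCompactSupport u) {t : ℝ} (ht : t ≠ 0) : HasCompactSupport fun x => |u x| ^ t :=
  h.comp_left (g := fun y => |y| ^ t) (by simp [Real.zero_rpow ht])

theorem Continuous.integrable_abs_rpow_of_hasCompactSupport {X : Type*} [TopologicalSpace X]
    [MeasurableSpace X] [OpensMeasurableSpace X] {μ : Measure X} [IsFiniteMeasureOnCompacts μ]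
    {u : X → ℝ} (hu : Continuous u) (h : HasCompactSupport u) {t : ℝ} (ht : 0 < t) :
    Integrable (fun x => |u x| ^ t) μ :=
  (hu.abs.rpow_const fun _ => Or.inr ht.le).integrable_of_hasCompactSupport (h.abs_rpow ht.ne')

theorem eLpNorm_toNNReal_eq_integral_rpow {α F : Type*} [MeasurableSpace α]
    [NormedAddCommGroup F] {μ : Measure α} {f : α → F} {t : ℝ} (ht : 0 < t)
    (hf : MemLp f t.toNNReal μ) :
    eLpNorm f t.toNNReal μ = .ofReal ((∫ x, ‖f x‖ ^ t ∂μ) ^ t⁻¹) := by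
  rw [hf.eLpNorm_eq_integral_rpow_norm (by simpa using ht) ENNReal.coe_ne_top]
  simp [ht.le]

theorem integral_abs_rpow_le_interpolation {α : Type*} [MeasurableSpace α] {μ : Measure α}
    {g : α → ℝ} {q r s θ : ℝ} (hq : 0 < q) (hs : 0 < s) (hθ : θ ∈ Ioo 0 1)
    (hr : r⁻¹ = θ / q + (1 - θ) / s)
    (hgq : MemLp g (.ofReal q) μ) (hgs : MemLp g (.ofReal s) μ) :
    ∫ x, |g x| ^ r ∂μ ≤
      (∫ x, |g x| ^ q ∂μ) ^ (θ * r / q) * (∫ x, |g x| ^ s ∂μ) ^ ((1 - θ) * r / s) := by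
  obtain ⟨hθ0, hθ1⟩ := hθ
  have h1θ : 0 < 1 - θ := sub_pos.2 hθ1
  have hr0 : 0 < r := inv_pos.1 (hr ▸ by positivity)
  have hconj : (q / (θ * r)).HolderConjugate (s / ((1 - θ) * r)) := by
    have hsum : θ * r / q + (1 - θ) * r / s = 1 := by
      rw [mul_comm θ, mul_comm (1 - θ), mul_div_assoc, mul_div_assoc, ← mul_add, ← hr,
        mul_inv_cancel₀ hr0.ne']
    have hθr : θ * r / q < 1 := by linarith [div_pos (mul_pos h1θ hr0) hs]
    rw [Real.holderConjugate_iff, inv_div, inv_div, one_lt_div (by positivity)]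
    exact ⟨(div_lt_one hq).1 hθr, hsum⟩
  have hmem {t a : ℝ} (ha : 0 < a) (hg : MemLp g (.ofReal t) μ) :
      MemLp (fun x => |g x| ^ a) (.ofReal (t / a)) μ := by
    have := hg.norm_rpow_div (.ofReal a)
    rwa [ENNReal.toReal_ofReal ha.le, ← ENNReal.ofReal_div_of_pos ha] at this
  have hpow {t a : ℝ} (ha : 0 < a) (x : α) : (|g x| ^ a) ^ (t / a) = |g x| ^ t := by
    rw [← Real.rpow_mul (abs_nonneg _), mul_div_cancel₀ _ ha.ne']
  have holder := integral_mul_le_Lp_mul_Lq_of_nonneg hconj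
    (Eventually.of_forall fun x => Real.rpow_nonneg (abs_nonneg (g x)) (θ * r))
    (Eventually.of_forall fun x => Real.rpow_nonneg (abs_nonneg (g x)) ((1 - θ) * r))
    (hmem (by positivity) hgq) (hmem (by positivity) hgs)
  simp only [hpow (mul_pos hθ0 hr0), hpow (mul_pos h1θ hr0), one_div_div] at holder
  refine le_of_eq_of_le (integral_congr_ae (Eventually.of_forall fun x => ?_)) holder
  rw [← Real.rpow_add' (abs_nonneg _) (by linarith)]
  ring_nf

section Sobolev

variable {E : Type*} [NormedAddCommGroup E] [NormedSpace ℝ E] [FiniteDimensional ℝ E]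
  [MeasurableSpace E] [BorelSpace E] (μ : Measure E) [μ.IsAddHaarMeasure]

theorem integral_abs_rpow_le_sobolev {u : E → ℝ} (hu : ContDiff ℝ 1 u)
    (h2u : HasCompactSupport u) {q s : ℝ} (hq : 1 ≤ q) (hs : 0 < s) (hn : 0 < finrank ℝ E)
    (hqs : s⁻¹ = q⁻¹ - (finrank ℝ E : ℝ)⁻¹) :
    (∫ x, |u x| ^ s ∂μ) ^ s⁻¹ ≤
      SNormLESNormFDerivOfEqConst ℝ μ q * (∫ x, ‖fderiv ℝ u x‖ ^ q ∂μ) ^ q⁻¹ := by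
  have hq0 : 0 < q := zero_lt_one.trans_le hq
  have key := eLpNorm_le_eLpNorm_fderiv_of_eq (F := ℝ) μ hu h2u (p := q.toNNReal)
    (p' := s.toNNReal) (by simpa using hq) hn (by simpa [hs.le, hq0.le] using hqs)
  rw [eLpNorm_toNNReal_eq_integral_rpow hs (hu.continuous.memLp_of_hasCompactSupport h2u),
    eLpNorm_toNNReal_eq_integral_rpow hq0
      ((hu.continuous_fderiv one_ne_zero).memLp_of_hasCompactSupport (h2u.fderiv ℝ)),
    ← ENNReal.ofReal_coe_nnreal, ← ENNReal.ofReal_mul NNReal.zero_le_coe,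
    ENNReal.ofReal_le_ofReal_iff (by positivity)] at key
  simpa only [Real.norm_eq_abs, Real.coe_toNNReal _ hq0.le] using key

theorem exists_integral_abs_rpow_le_rpow_add {q r : ℝ} (hq : 1 ≤ q) (hqn : q < finrank ℝ E)
    (hqr : q < r) (hrn : r < finrank ℝ E * q / (finrank ℝ E - q)) :
    ∃ K ≥ 0, ∀ u : E → ℝ, ContDiff ℝ 1 u → HasCompactSupport u →
      ∫ x, |u x| ^ r ∂μ ≤ K * (∫ x, |u x| ^ q ∂μ + ∫ x, ‖fderiv ℝ u x‖ ^ q ∂μ) ^ (r / q) := by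
  set n : ℝ := (finrank ℝ E : ℝ)
  set s := n * q / (n - q) with hs_def
  have hq0 : 0 < q := zero_lt_one.trans_le hq
  have hn : 0 < n := hq0.trans hqn
  have hs : 0 < s := div_pos (by positivity) (sub_pos.2 hqn)
  have hqs : s⁻¹ = q⁻¹ - n⁻¹ := by
    rw [hs_def, inv_div]
    field_simp
  obtain ⟨θ, hθ, hr⟩ := exists_mem_Ioo_inv_eq_add hq0 hqr hrn
  have h1θ : 0 ≤ (1 - θ) * r := mul_nonneg (sub_pos.2 hθ.2).le (hq0.trans hqr).le
  set CS : ℝ := (SNormLESNormFDerivOfEqConst ℝ μ q : ℝ)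
  refine ⟨CS ^ ((1 - θ) * r), by positivity, fun u hu h2u => ?_⟩
  set Iq := ∫ x, |u x| ^ q ∂μ
  set Is := ∫ x, |u x| ^ s ∂μ
  set Gq := ∫ x, ‖fderiv ℝ u x‖ ^ q ∂μ
  have hIq : 0 ≤ Iq := integral_nonneg fun x => by positivity
  have hIs : 0 ≤ Is := integral_nonneg fun x => by positivity
  have hGq : 0 ≤ Gq := integral_nonneg fun x => by positivity
  have hsob : Is ^ ((1 - θ) * r / s) ≤ CS ^ ((1 - θ) * r) * Gq ^ ((1 - θ) * r / q) := by
    rw [div_eq_mul_inv, div_eq_mul_inv, mul_comm _ s⁻¹, mul_comm _ q⁻¹, Real.rpow_mul hIs,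
      Real.rpow_mul hGq, ← Real.mul_rpow (by positivity) (by positivity)]
    gcongr
    exact integral_abs_rpow_le_sobolev μ hu h2u hq hs (Nat.cast_pos.1 hn) hqs
  calc ∫ x, |u x| ^ r ∂μ ≤ Iq ^ (θ * r / q) * Is ^ ((1 - θ) * r / s) :=
        integral_abs_rpow_le_interpolation hq0 hs hθ hr
          (hu.continuous.memLp_of_hasCompactSupport h2u)
          (hu.continuous.memLp_of_hasCompactSupport h2u)
    _ ≤ (Iq + Gq) ^ (θ * r / q) * (CS ^ ((1 - θ) * r) * (Iq + Gq) ^ ((1 - θ) * r / q)) := by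
        gcongr ?_ * ?_
        · exact Real.rpow_le_rpow hIq (le_add_of_nonneg_right hGq)
            (div_nonneg (mul_pos hθ.1 (hq0.trans hqr)).le hq0.le)
        · refine hsob.trans ?_
          gcongr
          exact le_add_of_nonneg_left hIq
    _ = CS ^ ((1 - θ) * r) * (Iq + Gq) ^ (r / q) := by
        have hexp : θ * r / q + (1 - θ) * r / q = r / q := by ring
        have hr0 : 0 < r / q := div_pos (hq0.trans hqr) hq0
        rw [mul_left_comm, ← Real.rpow_add' (by positivity) (hexp ▸ hr0.ne'), hexp]

end Sobolev

section pNormPow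

variable {N : ℕ} {V : EuclideanSpace ℝ (Fin N) → ℝ} {V₀ t : ℝ}
  {u : EuclideanSpace ℝ (Fin N) → ℝ}

theorem pNormPow_nonneg (hV : ∀ x, 0 ≤ V x) : 0 ≤ pNormPow N V t u :=
  add_nonneg (integral_nonneg fun _ => by positivity)
    (integral_nonneg fun x => mul_nonneg (hV x) (by positivity))

theorem integral_norm_fderiv_rpow_add_mul_integral_abs_rpow_le_pNormPow (hV : Continuous V)
    (hVlb : ∀ x, V₀ ≤ V x) (ht : 0 < t) (hu : Continuous u) (h2u : HasCompactSupport u) :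
    (∫ x, ‖fderiv ℝ u x‖ ^ t) + V₀ * ∫ x, |u x| ^ t ≤ pNormPow N V t u := by
  rw [pNormPow, ← integral_const_mul]
  refine add_le_add le_rfl (integral_mono
    ((hu.integrable_abs_rpow_of_hasCompactSupport h2u ht).const_mul V₀)
    ((hV.mul (hu.abs.rpow_const fun _ => Or.inr ht.le)).integrable_of_hasCompactSupport
      (h2u.abs_rpow ht.ne').mul_left) fun x => ?_)
  exact mul_le_mul_of_nonneg_right (hVlb x) (by positivity)

theorem integral_abs_rpow_add_integral_norm_fderiv_rpow_le_mul_pNormPow (hV : Continuous V)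
    (hV₀ : 0 < V₀) (hVlb : ∀ x, V₀ ≤ V x) (ht : 0 < t) (hu : Continuous u)
    (h2u : HasCompactSupport u) :
    (∫ x, |u x| ^ t) + ∫ x, ‖fderiv ℝ u x‖ ^ t ≤ (V₀⁻¹ + 1) * pNormPow N V t u := by
  have h := integral_norm_fderiv_rpow_add_mul_integral_abs_rpow_le_pNormPow hV hVlb ht hu h2u
  have hI : 0 ≤ ∫ x, |u x| ^ t := integral_nonneg fun _ => by positivity
  have hG : 0 ≤ ∫ x, ‖fderiv ℝ u x‖ ^ t := integral_nonneg fun _ => by positivity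
  have hIV : ∫ x, |u x| ^ t ≤ V₀⁻¹ * pNormPow N V t u := by
    rw [← div_eq_inv_mul, le_div_iff₀ hV₀]
    nlinarith
  nlinarith

theorem pNormPow_pos (hV : Continuous V) (hV₀ : 0 < V₀) (hVlb : ∀ x, V₀ ≤ V x) (ht : 0 < t)
    (hu : Continuous u) (h2u : HasCompactSupport u) (hu0 : u ≠ 0) : 0 < pNormPow N V t u := by
  obtain ⟨x₀, hx₀⟩ := Function.ne_iff.1 hu0
  have hI : 0 < ∫ x, |u x| ^ t :=
    (hu.abs.rpow_const fun _ => Or.inr ht.le).integral_pos_of_hasCompactSupport_nonneg_nonzero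
      (h2u.abs_rpow ht.ne') (fun _ => by positivity) (x := x₀)
      (Real.rpow_pos_of_pos (abs_pos.2 hx₀) t).ne'
  have hG : 0 ≤ ∫ x, ‖fderiv ℝ u x‖ ^ t := integral_nonneg fun _ => by positivity
  linarith [integral_norm_fderiv_rpow_add_mul_integral_abs_rpow_le_pNormPow hV hVlb ht hu h2u,
    mul_pos hV₀ hI]

theorem pNormPow_le_mul_integral_abs_rpow_of_nehari {p q r C : ℝ} {f : ℝ → ℝ}
    (hV : Continuous V) (hVlb : ∀ x, V₀ ≤ V x) (hp : 0 < p) (hr : 0 < r)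
    (hf : Continuous f) (hfC : ∀ t, f t * t ≤ V₀ * |t| ^ p + C * |t| ^ r)
    (hu : Continuous u) (h2u : HasCompactSupport u)
    (hneh : pNormPow N V p u + pNormPow N V q u = ∫ x, f (u x) * u x) :
    pNormPow N V q u ≤ C * ∫ x, |u x| ^ r := by
  have hIp := hu.integrable_abs_rpow_of_hasCompactSupport h2u (μ := volume) hp
  have hIr := hu.integrable_abs_rpow_of_hasCompactSupport h2u (μ := volume) hr
  have hnehari : pNormPow N V p u + pNormPow N V q u ≤
      V₀ * (∫ x, |u x| ^ p) + C * ∫ x, |u x| ^ r := by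
    rw [hneh, ← integral_const_mul, ← integral_const_mul,
      ← integral_add (hIp.const_mul _) (hIr.const_mul _)]
    exact integral_mono (((hf.comp hu).mul hu).integrable_of_hasCompactSupport
      (h2u.comp_left (g := fun y => f y * y) (mul_zero _))) ((hIp.const_mul _).add
      (hIr.const_mul _)) fun x => hfC (u x)
  have hG : 0 ≤ ∫ x, ‖fderiv ℝ u x‖ ^ p := integral_nonneg fun _ => by positivity
  linarith [integral_norm_fderiv_rpow_add_mul_integral_abs_rpow_le_pNormPow hV hVlb hp hu h2u]

end pNormPow

theorem stmt18 (N : ℕ) (p q r V₀ : ℝ)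
    (hp : 1 < p) (hpq : p < q) (hqN : q < (N : ℝ))
    (hqr : q < r) (hrcrit : r < (N : ℝ) * q / ((N : ℝ) - q))
    (V : EuclideanSpace ℝ (Fin N) → ℝ) (hV : Continuous V)
    (hV₀ : 0 < V₀) (hVlb : ∀ x, V₀ ≤ V x)
    (f : ℝ → ℝ) (hf : Continuous f)
    (h0 : Tendsto (fun t : ℝ => f t / |t| ^ (p - 1)) (𝓝[≠] (0 : ℝ)) (𝓝 0))
    (hinf : Tendsto (fun t : ℝ => f t / |t| ^ (r - 1)) (Filter.cocompact ℝ) (𝓝 0)) :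
    ∃ κ > (0:ℝ), ∀ u : EuclideanSpace ℝ (Fin N) → ℝ,
      ContDiff ℝ 1 u → HasCompactSupport u → u ≠ 0 →
      pNormPow N V p u + pNormPow N V q u
        = ∫ x : EuclideanSpace ℝ (Fin N), f (u x) * u x →
      κ ≤ vNorm N V p u + vNorm N V q u := by
  have hq : 1 ≤ q := by linarith
  obtain ⟨C, hC, hfC⟩ := exists_mul_self_le_rpow_add_rpow hf hV₀ h0 hinf
  obtain ⟨K, hK, hKu⟩ := exists_integral_abs_rpow_le_rpow_add
    (volume : Measure (EuclideanSpace ℝ (Fin N))) hq (by simpa using hqN) hqr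
    (by simpa using hrcrit)
  set a := r / q
  have ha : 1 < a := (one_lt_div (by linarith)).2 hqr
  -- the `+ 1` keeps `c`, hence `κ`, positive even if `C * K = 0`
  set c := (C * K + 1) * (V₀⁻¹ + 1) ^ a
  refine ⟨(c⁻¹ ^ (a - 1)⁻¹) ^ (1 / q), by positivity, fun u hu h2u hu0 hneh => ?_⟩
  set B := pNormPow N V q u
  have hB0 : 0 < B := pNormPow_pos hV hV₀ hVlb (by linarith) hu.continuous h2u hu0
  have hB : B ≤ c * B ^ a := calc
    B ≤ C * ∫ x, |u x| ^ r := pNormPow_le_mul_integral_abs_rpow_of_nehari hV hVlb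
        (by linarith) (by linarith) hf hfC hu.continuous h2u hneh
    _ ≤ C * (K * ((∫ x, |u x| ^ q) + ∫ x, ‖fderiv ℝ u x‖ ^ q) ^ a) := by
        gcongr
        exact hKu u hu h2u
    _ ≤ C * (K * ((V₀⁻¹ + 1) * B) ^ a) := by
        gcongr
        exact integral_abs_rpow_add_integral_norm_fderiv_rpow_le_mul_pNormPow hV hV₀ hVlb
          (by linarith) hu.continuous h2u
    _ ≤ c * B ^ a := by
        rw [Real.mul_rpow (by positivity) hB0.le]
        have : 0 ≤ (V₀⁻¹ + 1) ^ a * B ^ a := by positivity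
        nlinarith
  have hA : 0 ≤ vNorm N V p u :=
    Real.rpow_nonneg (pNormPow_nonneg fun x => hV₀.le.trans (hVlb x)) _
  exact le_add_of_nonneg_of_le hA (Real.rpow_le_rpow (by positivity)
    (rpow_inv_sub_one_le_of_le_mul_rpow ha hB0 hB) (by positivity))
end
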